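/- arXiv:2401.06660 — 2 statements merged into one kernel-verified Lean document; each statement's English description precedes it below -/
import Mathlib

section
/- For any switch function Λ : ℝ → [0,1] (non-decreasing, equal to 0 for x < c and 1 for x > d for some c ≤ d) and any real number a, the function x ↦ Λ(x+a) − Λ(x) is integrable and ∫_ℝ (Λ(x+a) − Λ(x)) dx = a. -/
open MeasureTheory

/-- For any switch function `Λ` and any real `a`, the function
`x ↦ Λ(x+a) − Λ(x)` is integrable with integral `a`. -/
theorem switch_function_integral
    (Λ : ℝ → ℝ) (hmono : Monotone Λ) (hrange : ∀ x, Λ x ∈ Set.Icc (0:ℝ) 1)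
    (c d : ℝ) (hcd : c ≤ d)
    (h0 : ∀ x < c, Λ x = 0) (h1 : ∀ x > d, Λ x = 1) (a : ℝ) :
    Integrable (fun x => Λ (x + a) - Λ x) ∧
      ∫ x : ℝ, (Λ (x + a) - Λ x) = a := by
  set A : ℝ := min c (c - a) - 1 with hA
  set B : ℝ := max d (d - a) + 1 with hB
  have hAB : A ≤ B := by
    have : min c (c - a) - 1 ≤ c := by
      have := min_le_left c (c - a); linarith
    have : d ≤ max d (d - a) + 1 := by
      have := le_max_left d (d - a); linarith
    simp only [hA, hB]
    have h1' := min_le_left c (c - a)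
    have h2' := le_max_left d (d - a)
    linarith
  have hsupp : Function.support (fun x => Λ (x + a) - Λ x) ⊆ Set.Ioc A B := by
    intro x hx
    simp only [Function.mem_support] at hx
    by_contra hmem
    simp only [Set.mem_Ioc, not_and_or, not_lt, not_le] at hmem
    rcases hmem with hxA | hxB
    · have hx1 : Λ x = 0 := h0 x (by
        have := min_le_left c (c - a); simp only [hA] at hxA; linarith)
      have hx2 : Λ (x + a) = 0 := h0 (x + a) (by
        have := min_le_right c (c - a); simp only [hA] at hxA; linarith)
      exact hx (by rw [hx1, hx2]; ring)
    · have hx1 : Λ x = 1 := h1 x (by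
        have := le_max_left d (d - a); simp only [hB] at hxB; linarith)
      have hx2 : Λ (x + a) = 1 := h1 (x + a) (by
        have := le_max_right d (d - a); simp only [hB] at hxB; linarith)
      exact hx (by rw [hx1, hx2]; ring)
  have hmono' : Monotone (fun x => Λ (x + a)) := fun x y hxy =>
    hmono (by linarith)
  have hInt1 : IntervalIntegrable (fun x => Λ (x + a)) volume A B :=
    hmono'.intervalIntegrable
  have hInt2 : IntervalIntegrable Λ volume A B := hmono.intervalIntegrable
  have hIntAB : IntervalIntegrable (fun x => Λ (x + a) - Λ x) volume A B :=
    hInt1.sub hInt2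
  have hIntOn : IntegrableOn (fun x => Λ (x + a) - Λ x) (Set.Ioc A B) := hIntAB.1
  have hint : Integrable (fun x => Λ (x + a) - Λ x) :=
    (integrableOn_iff_integrable_of_support_subset hsupp).mp hIntOn
  refine ⟨hint, ?_⟩
  rw [← intervalIntegral.integral_eq_integral_of_support_subset hsupp]
  rw [intervalIntegral.integral_sub hInt1 hInt2]
  rw [intervalIntegral.integral_comp_add_right Λ a]
  have key1 : ∫ x in (A + a)..(B + a), Λ x =
      (∫ x in (A + a)..A, Λ x) + (∫ x in A..B, Λ x) + ∫ x in B..(B + a), Λ x := by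
    rw [intervalIntegral.integral_add_adjacent_intervals,
        intervalIntegral.integral_add_adjacent_intervals]
    all_goals exact hmono.intervalIntegrable
  have hzero : ∫ x in (A + a)..A, Λ x = 0 := by
    have : Set.EqOn Λ 0 (Set.uIcc (A + a) A) := by
      intro x hx
      have hxle : x ≤ max (A + a) A := hx.2
      have h1' := min_le_left c (c - a)
      have h2' := min_le_right c (c - a)
      have : x < c := by
        rcases max_cases (A + a) A with ⟨heq, _⟩ | ⟨heq, _⟩ <;>
          simp only [hA] at * <;> linarith
      exact h0 x this
    rw [intervalIntegral.integral_congr this]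
    simp
  have hone : ∫ x in B..(B + a), Λ x = a := by
    have : Set.EqOn Λ 1 (Set.uIcc B (B + a)) := by
      intro x hx
      have hxge : min B (B + a) ≤ x := hx.1
      have h1' := le_max_left d (d - a)
      have h2' := le_max_right d (d - a)
      have : d < x := by
        rcases min_cases B (B + a) with ⟨heq, _⟩ | ⟨heq, _⟩ <;>
          simp only [hB] at * <;> linarith
      exact h1 x this
    rw [intervalIntegral.integral_congr this]
    simp
  rw [key1, hzero, hone]
  ring
end

section
/- If A, B are bounded operators on a Hilbert space such that [A,B] = AB − BA is trace class, then [[A,B],B] has trace zero. -/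
open MeasureTheory

variable {H : Type} [NormedAddCommGroup H] [InnerProductSpace ℂ H]

/-- A bounded operator is trace class when its diagonal is absolutely summable
in every Hilbert basis. -/
def IsTraceClass (T : H →L[ℂ] H) : Prop :=
  ∀ (ι : Type) (e : HilbertBasis ι ℂ H),
    Summable fun i => ‖(inner ℂ (e i) (T (e i)) : ℂ)‖

/-!
Put `T = [A, B]`, so that `[[A, B], B] = [T, B]`; it suffices that `Tr [T, B] = 0` for every
trace-class `T` and bounded `B`. Splitting `T = ℜ T + i ℑ T` and then a self-adjoint `S` as
`S⁺ - S⁻` reduces this to `T = X²` with `X = √(S⁺)` Hilbert–Schmidt. That `X` is Hilbert–Schmidt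
is seen in a Hilbert basis made of vectors of `ker S⁺` and of its orthogonal complement: there
`‖X v‖² = ⟪v, S⁺ v⟫` is `0` or `⟪v, S v⟫`, since `S⁻` maps into `ker S⁺`. For Hilbert–Schmidt
`X, Y` the double series `∑ X_ij Y_ji` converges absolutely, whence `Tr XY = Tr YX`, and
`[X², B] = [X, XB] + [X, BX]`.
-/

open scoped ENNReal InnerProductSpace InnerProduct ComplexStarModule
open ContinuousLinearMap

theorem HilbertBasis.hasSum_norm_inner_sq {𝕜 E ι : Type*} [RCLike 𝕜] [NormedAddCommGroup E]
    [InnerProductSpace 𝕜 E] (e : HilbertBasis ι 𝕜 E) (x : E) :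
    HasSum (fun i => ‖(inner 𝕜 (e i) x : 𝕜)‖ ^ 2) (‖x‖ ^ 2) := by
  simpa [e.repr_apply_apply] using lp.hasSum_norm (p := 2) (by norm_num) (e.repr x)

theorem HilbertBasis.tsum_enorm_inner_sq {𝕜 E ι : Type*} [RCLike 𝕜] [NormedAddCommGroup E]
    [InnerProductSpace 𝕜 E] (e : HilbertBasis ι 𝕜 E) (x : E) :
    ∑' i, ‖(inner 𝕜 (e i) x : 𝕜)‖ₑ ^ 2 = ‖x‖ₑ ^ 2 := by
  simp_rw [← ofReal_norm, ← ENNReal.ofReal_pow (norm_nonneg _)]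
  rw [← ENNReal.ofReal_tsum_of_nonneg (fun i => by positivity) (e.hasSum_norm_inner_sq x).summable,
    (e.hasSum_norm_inner_sq x).tsum_eq]

theorem summable_norm_sq_iff {ι E : Type*} [NormedAddCommGroup E] (g : ι → E) :
    Summable (fun i => ‖g i‖ ^ 2) ↔ ∑' i, ‖g i‖ₑ ^ 2 ≠ ⊤ := by
  have h := tsum_enorm_ne_top_iff_summable_norm (f := fun i => ‖g i‖ ^ 2)
  simp only [norm_pow, norm_norm, enorm_pow, enorm_norm] at h
  exact h.symm

theorem Submodule.exists_hilbertBasis_mem_or_mem_orthogonal {𝕜 E : Type*} [RCLike 𝕜]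
    [NormedAddCommGroup E] [InnerProductSpace 𝕜 E] [CompleteSpace E] (K : Submodule 𝕜 E)
    [CompleteSpace K] :
    ∃ (w : Set E) (b : HilbertBasis w 𝕜 E), ⇑b = ((↑) : w → E) ∧ ∀ v ∈ w, v ∈ K ∨ v ∈ Kᗮ := by
  obtain ⟨w₀, b₀, -⟩ := exists_hilbertBasis 𝕜 K
  have hs := (b₀.orthonormal.comp_linearIsometry K.subtypeₗᵢ).toSubtypeRange
  obtain ⟨w, b, hsw, hb⟩ := hs.exists_hilbertBasis_extension
  refine ⟨w, b, hb, fun v hv => or_iff_not_imp_left.2 fun hvK => ?_⟩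
  have hperp (i : w₀) : ⟪v, b₀ i⟫_𝕜 = 0 := by
    have hi : (b₀ i : E) ∈ w := hsw ⟨i, rfl⟩
    have hne : (⟨v, hv⟩ : w) ≠ ⟨b₀ i, hi⟩ := fun h => hvK (Subtype.mk.inj h ▸ (b₀ i).2)
    simpa [hb] using b.orthonormal.2 hne
  refine (K.mem_orthogonal' v).2 fun u hu => ?_
  have h := (b₀.hasSum_repr ⟨u, hu⟩).mapL ((innerSL 𝕜 v).comp K.subtypeL)
  simp only [map_smul, ContinuousLinearMap.comp_apply, coe_subtypeL, subtype_apply,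
    coe_innerSL_apply, hperp, smul_eq_mul, mul_zero] at h
  exact h.unique hasSum_zero

namespace IsTraceClass

theorem add {S T : H →L[ℂ] H} (hS : IsTraceClass S) (hT : IsTraceClass T) :
    IsTraceClass (S + T) := fun ι e =>
  .of_nonneg_of_le (fun _ => norm_nonneg _)
    (fun i => by simpa only [add_apply, inner_add_right] using norm_add_le _ _)
    ((hS ι e).add (hT ι e))

theorem smul {T : H →L[ℂ] H} (hT : IsTraceClass T) (c : ℂ) : IsTraceClass (c • T) := fun ι e =>
  ((hT ι e).mul_left ‖c‖).congr fun i => by rw [smul_apply, inner_smul_right, norm_mul]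

theorem neg {T : H →L[ℂ] H} (hT : IsTraceClass T) : IsTraceClass (-T) := by
  simpa only [neg_one_smul] using hT.smul (-1)

theorem sub {S T : H →L[ℂ] H} (hS : IsTraceClass S) (hT : IsTraceClass T) :
    IsTraceClass (S - T) := by
  simpa only [sub_eq_add_neg] using hS.add hT.neg

variable [CompleteSpace H]

theorem star {T : H →L[ℂ] H} (hT : IsTraceClass T) : IsTraceClass (star T) := fun ι e =>
  (hT ι e).congr fun i => by
    rw [star_eq_adjoint, adjoint_inner_right, ← inner_conj_symm, RCLike.norm_conj]

theorem realPart {T : H →L[ℂ] H} (hT : IsTraceClass T) : IsTraceClass (ℜ T : H →L[ℂ] H) := by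
  rw [realPart_apply_coe, RCLike.real_smul_eq_coe_smul (K := ℂ)]
  exact (hT.add hT.star).smul _

theorem imaginaryPart {T : H →L[ℂ] H} (hT : IsTraceClass T) :
    IsTraceClass (ℑ T : H →L[ℂ] H) := by
  rw [imaginaryPart_apply_coe, RCLike.real_smul_eq_coe_smul (K := ℂ)]
  exact ((hT.sub hT.star).smul _).smul _

end IsTraceClass

def IsHilbertSchmidt (X : H →L[ℂ] H) : Prop :=
  ∀ (ι : Type) (e : HilbertBasis ι ℂ H), Summable fun i => ‖X (e i)‖ ^ 2

section HilbertSchmidt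

theorem IsHilbertSchmidt.mul_left (B : H →L[ℂ] H) {X : H →L[ℂ] H} (hX : IsHilbertSchmidt X) :
    IsHilbertSchmidt (B * X) := by
  intro ι e
  refine .of_nonneg_of_le (fun i => by positivity) (fun i => ?_) ((hX ι e).mul_left (‖B‖ ^ 2))
  rw [← mul_pow]
  gcongr
  exact le_opNorm B _

theorem IsHilbertSchmidt.summable_norm_inner_sq {X : H →L[ℂ] H} (hX : IsHilbertSchmidt X)
    {ι : Type} (e : HilbertBasis ι ℂ H) :
    Summable fun p : ι × ι => ‖⟪e p.2, X (e p.1)⟫_ℂ‖ ^ 2 := by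
  refine (summable_prod_of_nonneg fun _ => by positivity).2
    ⟨fun i => (e.hasSum_norm_inner_sq (X (e i))).summable, ?_⟩
  simpa only [fun i => (e.hasSum_norm_inner_sq (X (e i))).tsum_eq] using hX ι e

variable [CompleteSpace H]

theorem tsum_enorm_sq_apply_eq_adjoint {ι κ : Type} (e : HilbertBasis ι ℂ H)
    (f : HilbertBasis κ ℂ H) (X : H →L[ℂ] H) :
    ∑' i, ‖X (e i)‖ₑ ^ 2 = ∑' j, ‖adjoint X (f j)‖ₑ ^ 2 := by
  have hswap (i : ι) (j : κ) : ‖⟪f j, X (e i)⟫_ℂ‖ₑ = ‖⟪e i, adjoint X (f j)⟫_ℂ‖ₑ := by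
    rw [adjoint_inner_right, ← inner_conj_symm, RCLike.enorm_conj]
  calc ∑' i, ‖X (e i)‖ₑ ^ 2 = ∑' i, ∑' j, ‖⟪f j, X (e i)⟫_ℂ‖ₑ ^ 2 := by
        simp only [f.tsum_enorm_inner_sq]
    _ = ∑' j, ∑' i, ‖⟪e i, adjoint X (f j)⟫_ℂ‖ₑ ^ 2 := by
        rw [ENNReal.tsum_comm]; simp only [hswap]
    _ = ∑' j, ‖adjoint X (f j)‖ₑ ^ 2 := by simp only [e.tsum_enorm_inner_sq]

theorem tsum_enorm_sq_apply_eq {ι κ : Type} (e : HilbertBasis ι ℂ H)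
    (f : HilbertBasis κ ℂ H) (X : H →L[ℂ] H) :
    ∑' i, ‖X (e i)‖ₑ ^ 2 = ∑' j, ‖X (f j)‖ₑ ^ 2 := by
  rw [tsum_enorm_sq_apply_eq_adjoint e f, tsum_enorm_sq_apply_eq_adjoint f f, adjoint_adjoint]

theorem isHilbertSchmidt_of_summable {ι : Type} (e : HilbertBasis ι ℂ H) {X : H →L[ℂ] H}
    (h : Summable fun i => ‖X (e i)‖ ^ 2) : IsHilbertSchmidt X := by
  intro κ f
  rw [summable_norm_sq_iff] at h ⊢
  rwa [← tsum_enorm_sq_apply_eq e f]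

theorem IsHilbertSchmidt.adjoint {X : H →L[ℂ] H} (hX : IsHilbertSchmidt X) :
    IsHilbertSchmidt (X†) := by
  intro ι e
  have := hX ι e
  rw [summable_norm_sq_iff] at this ⊢
  rwa [← tsum_enorm_sq_apply_eq_adjoint e e]

theorem IsHilbertSchmidt.mul_right {X : H →L[ℂ] H} (hX : IsHilbertSchmidt X) (B : H →L[ℂ] H) :
    IsHilbertSchmidt (X * B) := by
  simpa only [← star_eq_adjoint, star_mul, star_star] using
    (hX.adjoint.mul_left (B†)).adjoint

theorem IsHilbertSchmidt.hasSum_inner_mul_sub_mul {X Y : H →L[ℂ] H} (hX : IsHilbertSchmidt X)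
    (hY : IsHilbertSchmidt Y) {ι : Type} (e : HilbertBasis ι ℂ H) :
    HasSum (fun i => ⟪e i, (X * Y - Y * X) (e i)⟫_ℂ) 0 := by
  -- `F (i, j) = X_ij Y_ji` is absolutely summable by AM-GM, so its two iterated sums agree.
  set F : ι × ι → ℂ := fun p => ⟪e p.1, X (e p.2)⟫_ℂ * ⟪e p.2, Y (e p.1)⟫_ℂ
  have hF : Summable F := by
    refine Summable.of_norm_bounded
      ((hX.adjoint.summable_norm_inner_sq e).add (hY.summable_norm_inner_sq e)) fun p => ?_
    rw [norm_mul, adjoint_inner_right, norm_inner_symm]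
    nlinarith [sq_nonneg (‖⟪e p.1, X (e p.2)⟫_ℂ‖ - ‖⟪e p.2, Y (e p.1)⟫_ℂ‖)]
  have hXY (i : ι) : HasSum (fun j => F (i, j)) ⟪e i, (X * Y) (e i)⟫_ℂ := by
    simpa only [F, adjoint_inner_left, mul_apply_eq_comp] using
      e.hasSum_inner_mul_inner ((X†) (e i)) (Y (e i))
  have hYX (j : ι) : HasSum (fun i => F (i, j)) ⟪e j, (Y * X) (e j)⟫_ℂ := by
    simpa only [F, adjoint_inner_left, mul_apply_eq_comp, mul_comm] using
      e.hasSum_inner_mul_inner ((Y†) (e j)) (X (e j))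
  have h := (hF.hasSum.prod_fiberwise hXY).sub
    (((Equiv.prodComm ι ι).hasSum_iff.2 hF.hasSum).prod_fiberwise hYX)
  simpa only [sub_self, sub_apply, inner_sub_right] using h

theorem IsHilbertSchmidt.hasSum_inner_mul_self_commutator {X : H →L[ℂ] H}
    (hX : IsHilbertSchmidt X) (B : H →L[ℂ] H) {ι : Type} (e : HilbertBasis ι ℂ H) :
    HasSum (fun i => ⟪e i, (X * X * B - B * (X * X)) (e i)⟫_ℂ) 0 := by
  have hid : X * (X * B) - X * B * X + (X * (B * X) - B * X * X) = X * X * B - B * (X * X) := by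
    noncomm_ring
  rw [← hid]
  simpa only [add_zero, add_apply, inner_add_right] using
    (hX.hasSum_inner_mul_sub_mul (hX.mul_right B) e).add
      (hX.hasSum_inner_mul_sub_mul (hX.mul_left B) e)

end HilbertSchmidt

section Commutator

variable [CompleteSpace H]

theorem inner_apply_eq_norm_sqrt_apply_sq {P : H →L[ℂ] H} (hP : 0 ≤ P) (v : H) :
    ⟪v, P v⟫_ℂ = ((‖CFC.sqrt P v‖ ^ 2 : ℝ) : ℂ) := by
  conv_lhs => rw [← CFC.sqrt_mul_sqrt_self P hP]
  rw [mul_apply_eq_comp, ← adjoint_inner_left,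
    (CFC.sqrt_nonneg P).isSelfAdjoint.adjoint_eq, inner_self_eq_norm_sq_to_K]
  norm_cast

theorem isHilbertSchmidt_sqrt_of_mul_eq_zero {P Q : H →L[ℂ] H} (hP : 0 ≤ P) (hPQ : P * Q = 0)
    (h : IsTraceClass (P - Q)) : IsHilbertSchmidt (CFC.sqrt P) := by
  obtain ⟨w, b, hb, hmem⟩ := P.ker.exists_hilbertBasis_mem_or_mem_orthogonal
  refine isHilbertSchmidt_of_summable b
    (.of_nonneg_of_le (fun _ => by positivity) (fun i => ?_) (h w b))
  rw [hb]
  rcases hmem i i.2 with hker | hperp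
  · have : ((‖CFC.sqrt P i‖ ^ 2 : ℝ) : ℂ) = 0 := by
      rw [← inner_apply_eq_norm_sqrt_apply_sq hP, show P i = 0 from hker, inner_zero_right]
    exact (Complex.ofReal_eq_zero.1 this).le.trans (norm_nonneg _)
  · have hQ : ⟪(i : H), Q i⟫_ℂ = 0 := by
      refine Submodule.inner_left_of_mem_orthogonal ?_ hperp
      show (P * Q) i = 0
      rw [hPQ, zero_apply]
    rw [sub_apply, inner_sub_right, hQ, sub_zero, inner_apply_eq_norm_sqrt_apply_sq hP,
      Complex.norm_real, Real.norm_of_nonneg (by positivity)]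

theorem IsTraceClass.hasSum_inner_posPart_commutator {S : H →L[ℂ] H} (hS : IsTraceClass S)
    (hSa : IsSelfAdjoint S) (B : H →L[ℂ] H) {ι : Type} (e : HilbertBasis ι ℂ H) :
    HasSum (fun i => ⟪e i, (S⁺ * B - B * S⁺) (e i)⟫_ℂ) 0 := by
  have hX := isHilbertSchmidt_sqrt_of_mul_eq_zero (CFC.posPart_nonneg S)
    (CFC.posPart_mul_negPart S) (by rwa [CFC.posPart_sub_negPart S hSa])
  simpa only [CFC.sqrt_mul_sqrt_self _ (CFC.posPart_nonneg S)] using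
    hX.hasSum_inner_mul_self_commutator B e

theorem IsTraceClass.hasSum_inner_commutator_of_isSelfAdjoint {S : H →L[ℂ] H}
    (hS : IsTraceClass S) (hSa : IsSelfAdjoint S) (B : H →L[ℂ] H) {ι : Type}
    (e : HilbertBasis ι ℂ H) : HasSum (fun i => ⟪e i, (S * B - B * S) (e i)⟫_ℂ) 0 := by
  have h₂ := hS.neg.hasSum_inner_posPart_commutator hSa.neg B e
  rw [CFC.posPart_neg] at h₂
  have hid : S * B - B * S = (S⁺ * B - B * S⁺) - (S⁻ * B - B * S⁻) := by
    conv_lhs => rw [← CFC.posPart_sub_negPart S hSa]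
    noncomm_ring
  simpa only [hid, sub_zero, sub_apply, inner_sub_right] using
    (hS.hasSum_inner_posPart_commutator hSa B e).sub h₂

theorem IsTraceClass.hasSum_inner_commutator {T : H →L[ℂ] H}
    (hT : IsTraceClass T) (B : H →L[ℂ] H) {ι : Type} (e : HilbertBasis ι ℂ H) :
    HasSum (fun i => ⟪e i, (T * B - B * T) (e i)⟫_ℂ) 0 := by
  have h₁ := hT.realPart.hasSum_inner_commutator_of_isSelfAdjoint (ℜ T).2 B e
  have h₂ := hT.imaginaryPart.hasSum_inner_commutator_of_isSelfAdjoint (ℑ T).2 B e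
  have hid : T * B - B * T = (ℜ T * B - B * ℜ T : H →L[ℂ] H) +
      Complex.I • (ℑ T * B - B * ℑ T : H →L[ℂ] H) := by
    conv_lhs => rw [← realPart_add_I_smul_imaginaryPart T]
    simp only [add_mul, mul_add, smul_mul_assoc, mul_smul_comm, smul_sub]
    abel
  simpa only [hid, add_apply, smul_apply, inner_add_right, inner_smul_right, mul_zero,
    add_zero] using h₁.add (h₂.mul_left Complex.I)

end Commutator

/-- If `[A,B]` is trace class then `[[A,B],B]` has trace zero: in every Hilbert
basis, the diagonal of `[[A,B],B]` sums to `0`. -/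
theorem trace_double_commutator_eq_zero [CompleteSpace H]
    (A B : H →L[ℂ] H) (h : IsTraceClass (A * B - B * A)) :
    ∀ (ι : Type) (e : HilbertBasis ι ℂ H),
      HasSum
        (fun i => (inner ℂ (e i)
          (((A * B - B * A) * B - B * (A * B - B * A)) (e i)) : ℂ)) 0 :=
  fun _ e => h.hasSum_inner_commutator B e
end
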